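/- arXiv:2506.09000 — 4 statements merged into one kernel-verified Lean document; each statement's English description precedes it below -/
import Mathlib

section
/- Let T_G be the multivariate formal power series in commuting indeterminates (X_v)_{v∈V} over ℤ whose coefficient on the monomial ∏_{v∈V} X_v^{d_v} is the (finite) number of equivalence classes of words having exactly d_v occurrences of each letter v, for every finitely supported function d : V → ℕ. Then (Σ over cliques K of G of (-1)^{|K|} ∏_{v∈K} X_v) · T_G = 1 in the ring of formal power series ℤ[[(X_v)_{v∈V}]]. (Cartier–Foata identity, Eqn. (4.1).) -/
/-!
Write `[w]` for the class of a word `w`. The two facts about classes that drive the proof are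
cancellation, `[v w] = [v w'] → [w] = [w']`, and Levi's lemma: if `[u s] = [v t]` with `u ≠ v`,
then `u` and `v` are adjacent and `[s] = [v r]`, `[t] = [u r]` for some word `r`. Both follow
because deleting the first occurrence of a letter is compatible with the equivalence, while for
non-adjacent `u ≠ v` the order of the occurrences of `u` and `v` is an invariant. Consequently
the set `I(t)` of letters with which a class `t` can begin is a clique, and for a clique `K` the
classes of the form `[K] c` are exactly those with `K ⊆ I(t)`, each arising from a unique `c`.
The coefficient of `X^d` in the product is therefore the sum, over the classes `t` with
occurrence vector `d`, of `∑_{K ⊆ I(t)} (-1)^|K|`, which vanishes unless `I(t) = ∅`, that is,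
unless `t` is the empty class.
-/

open scoped Classical ENNReal

set_option linter.unusedSectionVars false

variable {V : Type*} [Fintype V] [DecidableEq V]

def AdjSwap (G : SimpleGraph V) (w w' : List V) : Prop :=
  ∃ (a b : List V) (u v : V), G.Adj u v ∧ w = a ++ u :: v :: b ∧ w' = a ++ v :: u :: b

def WordEquiv (G : SimpleGraph V) : List V → List V → Prop :=
  Relation.ReflTransGen (AdjSwap G)

lemma adjSwap_symm (G : SimpleGraph V) : Symmetric (AdjSwap G) := by
  rintro w w' ⟨a, b, u, v, h, rfl, rfl⟩
  exact ⟨a, b, v, u, h.symm, rfl, rfl⟩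

def wordSetoid (G : SimpleGraph V) : Setoid (List V) where
  r := WordEquiv G
  iseqv := ⟨fun _ => Relation.ReflTransGen.refl,
    fun h => by
      induction h with
      | refl => exact Relation.ReflTransGen.refl
      | tail _ hs ih => exact Relation.ReflTransGen.head (adjSwap_symm G hs) ih,
    fun h h' => Relation.ReflTransGen.trans h h'⟩

/-- The number of occurrences of each letter depends only on the equivalence class. -/
def classOcc (G : SimpleGraph V) (v : V) : Quotient (wordSetoid G) → ℕ :=
  Quotient.lift (fun w : List V => w.count v) (by
    intro a b h
    induction h with
    | refl => rfl
    | tail _ hs ih =>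
        obtain ⟨a', b', u, u', huv, rfl, rfl⟩ := hs
        rw [ih]
        simp only [List.count_append, List.count_cons]
        ring)

/-- The Cartier–Foata generating series: the coefficient on `∏ X_v ^ d_v` is the number of
equivalence classes of words having exactly `d v` occurrences of each letter `v`. -/
noncomputable def cartierFoataSeries (G : SimpleGraph V) : MvPowerSeries V ℤ :=
  fun d : V →₀ ℕ =>
    (Nat.card {c : Quotient (wordSetoid G) // ∀ v, classOcc G v c = d v} : ℤ)

open Finset

theorem Multiset.toFinsupp_cons {α : Type*} [DecidableEq α] (a : α) (s : Multiset α) :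
    toFinsupp (a ::ₘ s) = Finsupp.single a 1 + toFinsupp s := by
  rw [← singleton_add, toFinsupp_add, toFinsupp_singleton]

variable {G : SimpleGraph V}

namespace WordEquiv

theorem cons (x : V) {w w' : List V} (h : WordEquiv G w w') : WordEquiv G (x :: w) (x :: w') := by
  induction h with
  | refl => exact .refl
  | tail _ hs ih =>
    obtain ⟨a, b, u, v, huv, rfl, rfl⟩ := hs
    exact ih.tail ⟨x :: a, b, u, v, huv, rfl, rfl⟩

theorem swap {u v : V} (huv : G.Adj u v) (w : List V) : WordEquiv G (u :: v :: w) (v :: u :: w) :=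
  .single ⟨[], w, u, v, huv, rfl, rfl⟩

theorem perm {w w' : List V} (h : WordEquiv G w w') : w.Perm w' := by
  induction h with
  | refl => exact .refl w
  | tail _ hs ih =>
    obtain ⟨a, b, u, v, -, rfl, rfl⟩ := hs
    exact ih.trans ((List.Perm.swap v u b).append_left a)

theorem erase {w w' : List V} (h : WordEquiv G w w') (x : V) :
    WordEquiv G (w.erase x) (w'.erase x) := by
  induction h with
  | refl => exact .refl
  | tail _ hs ih =>
    obtain ⟨a, b, u, v, huv, rfl, rfl⟩ := hs
    refine ih.trans ?_
    by_cases ha : x ∈ a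
    · rw [List.erase_append_left _ ha, List.erase_append_left _ ha]
      exact .single ⟨a.erase x, b, u, v, huv, rfl, rfl⟩
    rw [List.erase_append_right _ ha, List.erase_append_right _ ha]
    by_cases hu : u = x
    · subst hu
      simp only [List.erase_cons_head, List.erase_cons_tail, beq_iff_eq, huv.ne',
        not_false_eq_true]
      exact .refl
    by_cases hv : v = x
    · subst hv
      simp only [List.erase_cons_head, List.erase_cons_tail, beq_iff_eq, huv.ne,
        not_false_eq_true]
      exact .refl
    simp only [List.erase_cons, beq_iff_eq, hu, hv, if_false]
    exact .single ⟨a, b.erase x, u, v, huv, rfl, rfl⟩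

theorem filter_eq {p : V → Bool} (hp : ∀ x y, p x → p y → ¬ G.Adj x y) {w w' : List V}
    (h : WordEquiv G w w') : w.filter p = w'.filter p := by
  induction h with
  | refl => rfl
  | tail _ hs ih =>
    obtain ⟨a, b, u, v, huv, rfl, rfl⟩ := hs
    rw [ih]
    by_cases hu : p u <;> by_cases hv : p v
    · exact absurd huv (hp u v hu hv)
    all_goals simp [List.filter_append, hu, hv]

end WordEquiv

abbrev Trace (G : SimpleGraph V) := Quotient (wordSetoid G)

namespace Trace

def cons (v : V) : Trace G → Trace G :=
  Quotient.map (v :: ·) fun _ _ => WordEquiv.cons v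

def erase (v : V) : Trace G → Trace G :=
  Quotient.map (·.erase v) fun _ _ h => h.erase v

noncomputable def occ : Trace G → V →₀ ℕ :=
  Quotient.lift (fun w : List V => Multiset.toFinsupp (w : Multiset V))
    fun _ _ h => congrArg _ (Multiset.coe_eq_coe.mpr h.perm)

def prepend (l : List V) (t : Trace G) : Trace G := l.foldr cons t

noncomputable def initials (t : Trace G) : Finset V := {v | ∃ s, t = cons v s}

noncomputable def occFiber (G : SimpleGraph V) (d : V →₀ ℕ) : Finset (Trace G) :=
  (Finsupp.toMultiset d).lists.toFinset.image (Quotient.mk _)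

@[simp] theorem cons_mk (v : V) (w : List V) :
    cons v (⟦w⟧ : Trace G) = ⟦v :: w⟧ := rfl

@[simp] theorem erase_mk (v : V) (w : List V) :
    erase v (⟦w⟧ : Trace G) = ⟦w.erase v⟧ := rfl

@[simp] theorem occ_mk (w : List V) :
    occ (⟦w⟧ : Trace G) = Multiset.toFinsupp (w : Multiset V) := rfl

@[simp] theorem prepend_cons (a : V) (l : List V) (t : Trace G) :
    prepend (a :: l) t = cons a (prepend l t) := rfl

theorem classOcc_eq_occ (v : V) (t : Trace G) : classOcc G v t = occ t v := by
  induction t using Quotient.ind with | _ w =>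
  exact (Multiset.coe_count v w).symm

theorem occ_cons (v : V) (t : Trace G) : occ (cons v t) = Finsupp.single v 1 + occ t := by
  induction t using Quotient.ind
  simp [← Multiset.cons_coe, Multiset.toFinsupp_cons]

theorem occ_prepend (l : List V) (t : Trace G) :
    occ (prepend l t) = Multiset.toFinsupp (l : Multiset V) + occ t := by
  induction l with
  | nil => simp [prepend]
  | cons a l ih =>
    rw [prepend_cons, occ_cons, ih, ← Multiset.cons_coe, Multiset.toFinsupp_cons, add_assoc]

theorem cons_ne_nil (v : V) (s : Trace G) : cons v s ≠ ⟦[]⟧ := fun h => by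
  simpa [occ_cons] using congrArg (fun t => occ t v) h

theorem mem_occFiber {d : V →₀ ℕ} {t : Trace G} : t ∈ occFiber G d ↔ occ t = d := by
  induction t using Quotient.ind with | _ w =>
  simp only [occFiber, mem_image, Multiset.mem_toFinset, Multiset.mem_lists_iff, occ_mk,
    Multiset.toFinsupp_eq_iff]
  constructor
  · rintro ⟨w', hw', hw⟩
    rw [hw', ← Multiset.coe_eq_coe.mpr (Quotient.exact hw).perm]
    rfl
  · intro hw
    exact ⟨w, hw.symm, rfl⟩

@[simp] theorem erase_cons_self (v : V) (t : Trace G) : erase v (cons v t) = t := by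
  induction t using Quotient.ind
  simp

theorem erase_cons_of_ne {u v : V} (h : u ≠ v) (t : Trace G) :
    erase v (cons u t) = cons u (erase v t) := by
  induction t using Quotient.ind
  simp [h]

theorem cons_injective (v : V) : Function.Injective (cons v : Trace G → Trace G) :=
  Function.LeftInverse.injective (erase_cons_self v)

theorem prepend_injective (l : List V) : Function.Injective (prepend l : Trace G → Trace G) := by
  induction l with
  | nil => exact Function.injective_id
  | cons a l ih => exact (cons_injective a).comp ih

theorem cons_cons_comm {u v : V} (huv : G.Adj u v) (t : Trace G) :
    cons u (cons v t) = cons v (cons u t) := by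
  induction t using Quotient.ind with | _ w =>
  exact Quotient.sound (WordEquiv.swap huv w)

theorem adj_of_cons_eq_cons {u v : V} (hne : u ≠ v) {s t : Trace G}
    (h : cons u s = cons v t) : G.Adj u v := by
  induction s using Quotient.ind with | _ x =>
  induction t using Quotient.ind with | _ y =>
  by_contra hadj
  let p : V → Bool := fun x => x = u ∨ x = v
  have hp : ∀ x y, p x → p y → ¬ G.Adj x y := by
    intro x y hx hy hxy
    simp only [p, decide_eq_true_eq] at hx hy
    rcases hx with rfl | rfl <;> rcases hy with rfl | rfl
    exacts [G.irrefl hxy, hadj hxy, hadj hxy.symm, G.irrefl hxy]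
  have := WordEquiv.filter_eq hp (Quotient.exact h)
  simp only [List.filter_cons_of_pos, List.cons.injEq, p, hne.symm, Bool.decide_or,
    decide_true, decide_false, Bool.true_or, Bool.or_true] at this
  exact hne this.1

/-- Levi's lemma for traces. -/
theorem exists_eq_cons_of_cons_eq_cons {u v : V} (hne : u ≠ v) {s t : Trace G}
    (h : cons u s = cons v t) : ∃ r, s = cons v r ∧ t = cons u r := by
  have hs : s = cons v (erase u t) := by
    rw [← erase_cons_self u s, h, erase_cons_of_ne hne.symm]
  refine ⟨erase u t, hs, ?_⟩
  calc t = erase v (cons v t) := (erase_cons_self v t).symm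
    _ = erase v (cons u s) := by rw [h]
    _ = cons u (erase v s) := erase_cons_of_ne hne s
    _ = cons u (erase u t) := by rw [hs, erase_cons_self]

theorem mem_initials {v : V} {t : Trace G} : v ∈ initials t ↔ ∃ s, t = cons v s := by
  simp [initials]

theorem isClique_initials (t : Trace G) : G.IsClique (initials t : Set V) := by
  intro u hu v hv hne
  obtain ⟨s, rfl⟩ := mem_initials.mp hu
  obtain ⟨s', hs'⟩ := mem_initials.mp hv
  exact adj_of_cons_eq_cons hne hs'

theorem mem_initials_of_mem_initials_cons {u v : V} (hne : u ≠ v) {t : Trace G}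
    (h : u ∈ initials (cons v t)) : u ∈ initials t := by
  obtain ⟨s, hs⟩ := mem_initials.mp h
  obtain ⟨r, -, hr⟩ := exists_eq_cons_of_cons_eq_cons hne hs.symm
  exact mem_initials.mpr ⟨r, hr⟩

theorem initials_eq_empty_iff {t : Trace G} : initials t = ∅ ↔ t = ⟦[]⟧ := by
  rw [eq_empty_iff_forall_notMem]
  induction t using Quotient.ind with | _ w =>
  cases w with
  | nil =>
    refine iff_of_true (fun v hv => ?_) rfl
    obtain ⟨s, hs⟩ := mem_initials.mp hv
    exact cons_ne_nil v s hs.symm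
  | cons a w =>
    exact iff_of_false (fun h => h a (mem_initials.mpr ⟨⟦w⟧, rfl⟩)) (cons_ne_nil a ⟦w⟧)

theorem mem_initials_prepend {l : List V} (hl : l.Pairwise G.Adj) {v : V} (hv : v ∈ l)
    (t : Trace G) : v ∈ initials (prepend l t) := by
  induction l with
  | nil => simp at hv
  | cons a l ih =>
    rw [mem_initials, prepend_cons]
    rcases List.mem_cons.mp hv with rfl | hv
    · exact ⟨_, rfl⟩
    obtain ⟨s, hs⟩ := mem_initials.mp (ih (List.pairwise_cons.mp hl).2 hv)
    exact ⟨cons a s, by rw [hs, cons_cons_comm ((List.pairwise_cons.mp hl).1 v hv)]⟩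

theorem exists_eq_prepend {l : List V} (hl : l.Nodup) {t : Trace G}
    (h : ∀ v ∈ l, v ∈ initials t) : ∃ s, t = prepend l s := by
  induction l generalizing t with
  | nil => exact ⟨t, rfl⟩
  | cons a l ih =>
    obtain ⟨t', rfl⟩ := mem_initials.mp (h a List.mem_cons_self)
    have ha : a ∉ l := (List.nodup_cons.mp hl).1
    obtain ⟨s, rfl⟩ := ih (List.nodup_cons.mp hl).2 fun v hv =>
      mem_initials_of_mem_initials_cons (ne_of_mem_of_not_mem hv ha)
        (h v (List.mem_cons_of_mem a hv))
    exact ⟨s, rfl⟩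

theorem subset_initials_iff {K : Finset V} (hK : G.IsClique (K : Set V)) (t : Trace G) :
    K ⊆ initials t ↔ ∃ s, t = prepend K.toList s := by
  refine ⟨fun h => exists_eq_prepend K.nodup_toList fun v hv => h (mem_toList.mp hv), ?_⟩
  rintro ⟨s, rfl⟩ v hv
  have hl : K.toList.Pairwise G.Adj := K.nodup_toList.pairwise_of_forall_ne
    fun a ha b hb hab => hK (mem_toList.mp ha) (mem_toList.mp hb) hab
  exact mem_initials_prepend hl (mem_toList.mpr hv) s

/-- `Multiset.toFinsupp K.val` is the indicator function of `K`. -/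
theorem card_filter_subset_initials {K : Finset V} (hK : G.IsClique (K : Set V))
    (d : V →₀ ℕ) :
    #{t ∈ occFiber G d | K ⊆ initials t} =
      if Multiset.toFinsupp K.val ≤ d then #(occFiber G (d - Multiset.toFinsupp K.val))
      else 0 := by
  have hocc (s : Trace G) : occ (prepend K.toList s) = Multiset.toFinsupp K.val + occ s := by
    rw [occ_prepend, coe_toList]
  split_ifs with hed
  · rw [← card_image_of_injective (occFiber G _) (prepend_injective K.toList)]
    congr 1
    ext t
    simp only [mem_filter, mem_image, mem_occFiber, subset_initials_iff hK]
    constructor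
    · rintro ⟨ht, s, rfl⟩
      exact ⟨s, by rw [← ht, hocc, add_tsub_cancel_left], rfl⟩
    · rintro ⟨s, hs, rfl⟩
      exact ⟨by rw [hocc, hs, add_tsub_cancel_of_le hed], s, rfl⟩
  · rw [card_eq_zero, filter_eq_empty_iff]
    intro t ht hKt
    obtain ⟨s, rfl⟩ := (subset_initials_iff hK t).mp hKt
    rw [mem_occFiber, hocc] at ht
    exact hed (le_self_add.trans_eq ht)

theorem sum_cliques_neg_one_pow_mul_card (d : V →₀ ℕ) :
    ∑ K ∈ univ.powerset.filter (fun K : Finset V => G.IsClique (K : Set V)),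
      (-1 : ℤ) ^ #K * #{t ∈ occFiber G d | K ⊆ initials t} = if d = 0 then 1 else 0 := by
  have hcliques (t : Trace G) :
      {K ∈ univ.powerset.filter (fun K : Finset V => G.IsClique (K : Set V)) | K ⊆ initials t}
        = (initials t).powerset := by
    ext K
    simp only [mem_filter, mem_powerset, subset_univ, true_and, and_iff_right_iff_imp]
    exact fun h => (isClique_initials t).subset (coe_subset.mpr h)
  calc _ = ∑ t ∈ occFiber G d, ∑ K ∈ (initials t).powerset, (-1 : ℤ) ^ #K := by
        simp only [card_filter, Nat.cast_sum, Nat.cast_ite, Nat.cast_one, Nat.cast_zero,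
          mul_sum, mul_ite, mul_one, mul_zero]
        rw [sum_comm]
        simp only [← sum_filter, hcliques]
    _ = #{t ∈ occFiber G d | t = ⟦[]⟧} := by
        simp only [sum_powerset_neg_one_pow_card, initials_eq_empty_iff, card_filter,
          Nat.cast_sum, Nat.cast_ite, Nat.cast_one, Nat.cast_zero]
    _ = if d = 0 then 1 else 0 := by
        have hnil : (⟦[]⟧ : Trace G) ∈ occFiber G d ↔ d = 0 := by
          rw [mem_occFiber, occ_mk, Multiset.coe_nil, map_zero, eq_comm]
        rw [filter_eq']
        split_ifs <;> simp_all

end Trace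

theorem MvPowerSeries.prod_X_eq_monomial {σ R : Type*} [DecidableEq σ] [CommSemiring R]
    (K : Finset σ) :
    ∏ v ∈ K, (X v : MvPowerSeries σ R) = monomial (Multiset.toFinsupp K.val) 1 := by
  rw [← K.prod_map_toList, ← K.coe_toList]
  induction K.toList with
  | nil => simp
  | cons a l ih =>
    rw [List.map_cons, List.prod_cons, ih, X_def, monomial_mul_monomial, one_mul,
      ← Multiset.cons_coe, Multiset.toFinsupp_cons]

theorem coeff_cartierFoataSeries (G : SimpleGraph V) (d : V →₀ ℕ) :
    MvPowerSeries.coeff d (cartierFoataSeries G) = #(Trace.occFiber G d) := by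
  show (Nat.card _ : ℤ) = _
  rw [Nat.subtype_card (Trace.occFiber G d) fun t => by
    simp only [Trace.mem_occFiber, Trace.classOcc_eq_occ, Finsupp.ext_iff]]

theorem coeff_prod_X_mul_cartierFoataSeries {K : Finset V} (hK : G.IsClique (K : Set V))
    (d : V →₀ ℕ) :
    MvPowerSeries.coeff d ((∏ v ∈ K, (MvPowerSeries.X v : MvPowerSeries V ℤ)) *
        cartierFoataSeries G) = #{t ∈ Trace.occFiber G d | K ⊆ Trace.initials t} := by
  rw [MvPowerSeries.prod_X_eq_monomial, MvPowerSeries.coeff_monomial_mul, one_mul,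
    Trace.card_filter_subset_initials hK, coeff_cartierFoataSeries]
  split_ifs <;> simp

theorem cartier_foata (G : SimpleGraph V) :
    (∑ K ∈ Finset.univ.powerset.filter (fun K : Finset V => G.IsClique (K : Set V)),
        ((-1 : MvPowerSeries V ℤ) ^ K.card * ∏ v ∈ K, MvPowerSeries.X v))
      * cartierFoataSeries G = 1 := by
  ext d
  rw [MvPowerSeries.coeff_one, sum_mul, map_sum, ← Trace.sum_cliques_neg_one_pow_mul_card d]
  refine sum_congr rfl fun K hK => ?_
  rw [← map_one (MvPowerSeries.C (σ := V) (R := ℤ)), ← map_neg, ← map_pow, mul_assoc,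
    MvPowerSeries.coeff_C_mul, coeff_prod_X_mul_cartierFoataSeries (mem_filter.mp hK).2]
end

section
/- For every u ∈ [0,∞)^V with Euclidean norm ‖u‖ = 1, the set {r ∈ [0,∞) : 𝕶_G(r·u) = 0} is nonempty, it has a minimum, and this minimum equals ρ(u). (Lemma 4.3(1).) -/
open scoped Classical ENNReal

set_option linter.unusedSectionVars false

variable {V : Type*} [Fintype V] [DecidableEq V]

/-- A word is `G`-reduced if between any two equal letters there is a letter distinct from
them and not adjacent to them. -/
def IsGReduced (G : SimpleGraph V) (w : List V) : Prop :=
  ∀ i j : Fin w.length, i < j → w.get i = w.get j →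
    ∃ k : Fin w.length, i < k ∧ k < j ∧ w.get k ≠ w.get i ∧ ¬ G.Adj (w.get k) (w.get i)

/-- The product `x_{w_1} ⋯ x_{w_ℓ}` depends only on the equivalence class of a word. -/
noncomputable def classProd (G : SimpleGraph V) (x : V → ℝ≥0∞) :
    Quotient (wordSetoid G) → ℝ≥0∞ :=
  Quotient.lift (fun w : List V => (w.map x).prod) (by
    intro a b h
    induction h with
    | refl => rfl
    | tail _ hs ih =>
        obtain ⟨a', b', u, v, huv, rfl, rfl⟩ := hs
        rw [ih]
        simp only [List.map_append, List.prod_append, List.map_cons, List.prod_cons]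
        ring)

/-- `tildeF G x` : the sum over all equivalence classes of words of `∏ x_{w_i}`,
valued in `[0,∞]`. -/
noncomputable def tildeF (G : SimpleGraph V) (x : V → ℝ) : ℝ≥0∞ :=
  ∑' c : Quotient (wordSetoid G), classProd G (fun v => ENNReal.ofReal (x v)) c

/-- `redF G x` : the sum over all equivalence classes of `G`-reduced words of `∏ x_{w_i}`,
valued in `[0,∞]`. -/
noncomputable def redF (G : SimpleGraph V) (x : V → ℝ) : ℝ≥0∞ :=
  ∑' c : {c : Quotient (wordSetoid G) // ∃ w, IsGReduced G w ∧ Quotient.mk (wordSetoid G) w = c},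
    classProd G (fun v => ENNReal.ofReal (x v)) c.1

/-- The clique polynomial `𝕶_{G,V'}(x) = ∑_{cliques K ⊆ V'} (-1)^{|K|} ∏_{v ∈ K} x_v`. -/
noncomputable def cliquePoly (G : SimpleGraph V) (V' : Finset V) (x : V → ℝ) : ℝ :=
  ∑ K ∈ V'.powerset.filter (fun K : Finset V => G.IsClique (K : Set V)),
    (-1 : ℝ) ^ K.card * ∏ v ∈ K, x v

/-- The Euclidean norm on `ℝ^V`. -/
noncomputable def eucNorm (x : V → ℝ) : ℝ := Real.sqrt (∑ v, x v ^ 2)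

/-- `min_{V' ⊆ V} 𝕶_{G,V'}(x)`. -/
noncomputable def minK (G : SimpleGraph V) (x : V → ℝ) : ℝ :=
  Finset.univ.inf' ⟨∅, Finset.mem_univ _⟩ fun V' : Finset V => cliquePoly G V' x

/-- `ρ(u) = inf {r ∈ [0,∞) : min_{V' ⊆ V} 𝕶_{G,V'}(r·u) = 0}`. -/
noncomputable def rho (G : SimpleGraph V) (u : V → ℝ) : ℝ :=
  sInf {r : ℝ | 0 ≤ r ∧ minK G (r • u) = 0}

/-- The region `R(G) = {x ∈ [0,1]^V : 𝕶_{G,V'}(x) > 0 for all V' ⊆ V}`. -/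
def regionR (G : SimpleGraph V) : Set (V → ℝ) :=
  {x | (∀ v, x v ∈ Set.Icc (0 : ℝ) 1) ∧ ∀ V' : Finset V, 0 < cliquePoly G V' x}

/-! The deletion recurrence `𝕶_{G,V' ∪ {v}} = 𝕶_{G,V'} - x_v 𝕶_{G,V' ∩ N(v)}` shows that at a point
`x ≥ 0` where every `𝕶_{G,W}` is nonnegative, `W ↦ 𝕶_{G,W}(x)` is antitone, so there
`𝕶_G(x) = min_{V'} 𝕶_{G,V'}(x)`. The map `r ↦ min_{V'} 𝕶_{G,V'}(r u)` is continuous, equals `1`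
at `0` and is `≤ 0` at `1 / u_v` (take `V' = {v}`), so its zero set in `[0, ∞)` is nonempty and
closed and contains `ρ(u)`, where the minimum, hence `𝕶_G`, vanishes. Conversely, if
`𝕶_G(r u) = 0` then the minimum is `≤ 0` at `r`, and by the intermediate value theorem it vanishes
somewhere in `[0, r]`, so `ρ(u) ≤ r`. -/

section

variable (G : SimpleGraph V)

theorem cliquePoly_insert {V' : Finset V} {v : V} (hv : v ∉ V') (x : V → ℝ) :
    cliquePoly G (insert v V') x =
      cliquePoly G V' x - x v * cliquePoly G (V' ∩ G.neighborFinset v) x := by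
  have hpow : (V' ∩ G.neighborFinset v).powerset =
      V'.powerset.filter (· ⊆ G.neighborFinset v) := by
    ext K; simp only [Finset.mem_powerset, Finset.mem_filter, Finset.subset_inter_iff]
  simp only [cliquePoly, Finset.sum_filter]
  rw [Finset.sum_powerset_insert hv, hpow, Finset.sum_filter, Finset.mul_sum, sub_eq_add_neg,
    ← Finset.sum_neg_distrib]
  congr 1
  refine Finset.sum_congr rfl fun K hK => ?_
  have hvK : v ∉ K := fun h => hv (Finset.mem_powerset.mp hK h)
  have hclique :
      G.IsClique (insert v K : Finset V) ↔ K ⊆ G.neighborFinset v ∧ G.IsClique K := by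
    rw [Finset.coe_insert, SimpleGraph.isClique_insert, and_comm]
    refine and_congr_left' ⟨fun h b hb => (G.mem_neighborFinset ..).mpr (h b hb ?_),
      fun h b hb _ => (G.mem_neighborFinset ..).mp (h hb)⟩
    rintro rfl
    exact hvK hb
  simp only [hclique, ite_and, Finset.card_insert_of_notMem hvK, Finset.prod_insert hvK]
  split_ifs <;> ring

theorem cliquePoly_empty (x : V → ℝ) : cliquePoly G ∅ x = 1 := by
  simp [cliquePoly, Finset.filter_singleton]

theorem cliquePoly_singleton (v : V) (x : V → ℝ) : cliquePoly G {v} x = 1 - x v := by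
  simpa [cliquePoly_empty] using cliquePoly_insert G (Finset.notMem_empty v) x

theorem cliquePoly_zero (V' : Finset V) : cliquePoly G V' 0 = 1 := by
  induction V' using Finset.induction_on with
  | empty => exact cliquePoly_empty G 0
  | insert v V' hv ih => rw [cliquePoly_insert G hv, ih, Pi.zero_apply, zero_mul, sub_zero]

theorem cliquePoly_insert_le {V' : Finset V} {v : V} {x : V → ℝ} (hx : 0 ≤ x v)
    (h : 0 ≤ cliquePoly G (V' ∩ G.neighborFinset v) x) :
    cliquePoly G (insert v V') x ≤ cliquePoly G V' x := by
  by_cases hv : v ∈ V'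
  · rw [Finset.insert_eq_of_mem hv]
  · rw [cliquePoly_insert G hv]
    exact sub_le_self _ (mul_nonneg hx h)

theorem cliquePoly_antitone {x : V → ℝ} (hx : 0 ≤ x) (h : ∀ W, 0 ≤ cliquePoly G W x)
    {V' W : Finset V} (hVW : V' ⊆ W) : cliquePoly G W x ≤ cliquePoly G V' x := by
  rw [← Finset.union_sdiff_of_subset hVW, Finset.union_comm]
  induction W \ V' using Finset.induction_on with
  | empty => rw [Finset.empty_union]
  | insert v s _ ih =>
    rw [Finset.insert_union]
    exact (cliquePoly_insert_le G (hx v) (h _)).trans ih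

theorem continuous_cliquePoly_smul (V' : Finset V) (u : V → ℝ) :
    Continuous fun r : ℝ => cliquePoly G V' (r • u) := by
  unfold cliquePoly
  fun_prop

theorem minK_le (x : V → ℝ) (V' : Finset V) : minK G x ≤ cliquePoly G V' x :=
  Finset.inf'_le _ (Finset.mem_univ _)

theorem minK_eq_cliquePoly_univ {x : V → ℝ} (hx : 0 ≤ x) (h : 0 ≤ minK G x) :
    minK G x = cliquePoly G Finset.univ x :=
  le_antisymm (minK_le G x _) <| Finset.le_inf' _ _ fun V' _ =>
    cliquePoly_antitone G hx (fun W => h.trans (minK_le G x W)) (Finset.subset_univ V')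

theorem minK_zero : minK G 0 = 1 := by
  simp only [minK, cliquePoly_zero]
  exact Finset.inf'_const _ _

theorem minK_inv_smul_nonpos {u : V → ℝ} {v : V} (hv : u v ≠ 0) : minK G ((u v)⁻¹ • u) ≤ 0 :=
  (minK_le G _ {v}).trans_eq <| by
    rw [cliquePoly_singleton, Pi.smul_apply, smul_eq_mul, inv_mul_cancel₀ hv, sub_self]

theorem continuous_minK_smul (u : V → ℝ) : Continuous fun r : ℝ => minK G (r • u) :=
  Continuous.finset_inf'_apply _ fun V' _ => continuous_cliquePoly_smul G V' u

theorem exists_minK_smul_eq_zero (u : V → ℝ) {r : ℝ} (hr : 0 ≤ r) (h : minK G (r • u) ≤ 0) :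
    ∃ c ∈ Set.Icc 0 r, minK G (c • u) = 0 := by
  have h0 : (0 : ℝ) ∈ Set.Icc (minK G (r • u)) (minK G ((0 : ℝ) • u)) := by
    rw [zero_smul, minK_zero]
    exact ⟨h, zero_le_one⟩
  exact intermediate_value_Icc' hr (continuous_minK_smul G u).continuousOn h0

theorem rho_le (u : V → ℝ) {r : ℝ} (hr : 0 ≤ r) (h : minK G (r • u) = 0) : rho G u ≤ r :=
  csInf_le ⟨0, fun _ hs => hs.1⟩ ⟨hr, h⟩

theorem rho_mem (u : V → ℝ) (h : {r : ℝ | 0 ≤ r ∧ minK G (r • u) = 0}.Nonempty) :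
    rho G u ∈ {r : ℝ | 0 ≤ r ∧ minK G (r • u) = 0} :=
  have hclosed : IsClosed {r : ℝ | 0 ≤ r ∧ minK G (r • u) = 0} :=
    isClosed_Ici.inter (isClosed_singleton.preimage (continuous_minK_smul G u))
  hclosed.csInf_mem h ⟨0, fun _ hs => hs.1⟩

end

theorem exists_ne_zero_of_eucNorm_ne_zero {u : V → ℝ} (h : eucNorm u ≠ 0) : ∃ v, u v ≠ 0 := by
  contrapose! h
  simp [eucNorm, h]

/-- Lemma 4.3(1): for a unit vector `u` in the nonnegative orthant, the set
`{r ∈ [0,∞) : 𝕶_G(r·u) = 0}` is nonempty, has a minimum, and this minimum equals `ρ(u)`. -/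
theorem rho_isLeast (G : SimpleGraph V) (u : V → ℝ)
    (hu : ∀ v, 0 ≤ u v) (hnorm : eucNorm u = 1) :
    {r : ℝ | 0 ≤ r ∧ cliquePoly G Finset.univ (r • u) = 0}.Nonempty ∧
    IsLeast {r : ℝ | 0 ≤ r ∧ cliquePoly G Finset.univ (r • u) = 0} (rho G u) := by
  obtain ⟨v, hv⟩ := exists_ne_zero_of_eucNorm_ne_zero (hnorm ▸ one_ne_zero)
  obtain ⟨c, hc, hc0⟩ :=
    exists_minK_smul_eq_zero G u (inv_nonneg.mpr (hu v)) (minK_inv_smul_nonpos G hv)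
  obtain ⟨hrho, hrho0⟩ := rho_mem G u ⟨c, hc.1, hc0⟩
  have hzero : cliquePoly G Finset.univ (rho G u • u) = 0 := by
    rw [← minK_eq_cliquePoly_univ G (smul_nonneg hrho hu) hrho0.ge, hrho0]
  refine ⟨⟨_, hrho, hzero⟩, ⟨hrho, hzero⟩, fun r ⟨hr, hr0⟩ => ?_⟩
  obtain ⟨c, hc, hc0⟩ := exists_minK_smul_eq_zero G u hr ((minK_le G _ _).trans hr0.le)
  exact (rho_le G u hc.1 hc0).trans hc.2
end

section
/- For every vertex v ∈ V and every G-reduced word w, exactly one of the following holds: (i) the word vw obtained by prepending v to w is G-reduced; (ii) w is equivalent to a word whose first letter is v. -/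
open scoped Classical ENNReal

set_option linter.unusedSectionVars false

variable {V : Type*} [Fintype V] [DecidableEq V]

/-!
Project a word onto a vertex `u`: erase the letters adjacent to `u` (they commute with `u`),
record `u` as `true` and every other letter as `false`. An admissible swap never changes a
projection, and a word is `G`-reduced iff none of its projections contains two consecutive
`true`s. If `v :: w` is not reduced while `w` is, the two `true`s must be the prepended `v` and
the first letter of the `v`-projection of `w`; so `w = m ++ v :: b` with every letter of `m`
adjacent to `v`, and `v` commutes to the front. Conversely, `w ≃ v :: t` makes the
`v`-projection of `v :: w` start with `true, true`.
-/

section Words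

variable {α : Type*} (G : SimpleGraph α)

lemma wordEquiv_cons (y : α) {w w' : List α} (h : WordEquiv G w w') :
    WordEquiv G (y :: w) (y :: w') := by
  induction h with
  | refl => exact .refl
  | tail _ hs ih =>
    obtain ⟨a, b, u, u', huv, rfl, rfl⟩ := hs
    exact ih.tail ⟨y :: a, b, u, u', huv, rfl, rfl⟩

lemma wordEquiv_append_cons_of_forall_adj {m : List α} {v : α} (hm : ∀ y ∈ m, G.Adj y v)
    (b : List α) : WordEquiv G (m ++ v :: b) (v :: (m ++ b)) := by
  induction m with
  | nil => exact .refl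
  | cons y m ih =>
    have hm' := List.forall_mem_cons.mp hm
    exact (wordEquiv_cons G y (ih hm'.2)).tail ⟨[], m ++ b, y, v, hm'.1, rfl, rfl⟩

lemma isGReduced_iff_forall_eq_append {w : List α} :
    IsGReduced G w ↔
      ∀ a m b u, w = a ++ u :: (m ++ u :: b) → ∃ y ∈ m, y ≠ u ∧ ¬ G.Adj y u := by
  constructor
  · rintro h a m b u rfl
    have hfst : (a ++ u :: (m ++ u :: b))[a.length]'(by simp) = u := by simp
    have hsnd : (a ++ u :: (m ++ u :: b))[a.length + m.length + 1]'(by simp; omega) = u := by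
      rw [List.getElem_append_right (by omega)]
      simp [show a.length + m.length + 1 - a.length = m.length + 1 by omega]
    obtain ⟨⟨k, hk⟩, hik, hkj, hne, hadj⟩ :=
      h ⟨a.length, by simp⟩ ⟨a.length + m.length + 1, by simp; omega⟩ (by simp [Fin.lt_def])
        (by simp only [List.get_eq_getElem, hfst, hsnd])
    simp only [Fin.lt_def] at hik hkj
    obtain ⟨n, rfl⟩ : ∃ n, k = a.length + 1 + n := ⟨k - a.length - 1, by omega⟩
    have hn : n < m.length := by omega
    have hmid : (a ++ u :: (m ++ u :: b))[a.length + 1 + n] = m[n] := by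
      rw [List.getElem_append_right (by omega)]
      simp [show a.length + 1 + n - a.length = n + 1 by omega, List.getElem_append_left hn]
    simp only [List.get_eq_getElem, hfst, hmid] at hne hadj
    exact ⟨m[n], List.getElem_mem hn, hne, hadj⟩
  · rintro h ⟨i, hi⟩ ⟨j, hj⟩ hij heq
    simp only [Fin.lt_def, List.get_eq_getElem] at hij heq ⊢
    set m := (w.drop (i + 1)).take (j - i - 1) with hm
    have hdecomp : w = w.take i ++ w[i] :: (m ++ w[i] :: w.drop (j + 1)) := by
      conv_lhs => rw [← List.take_append_drop i w, List.drop_eq_getElem_cons hi,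
        ← List.take_append_drop (j - i - 1) (w.drop (i + 1)), List.drop_drop,
        show i + 1 + (j - i - 1) = j by omega, List.drop_eq_getElem_cons hj, ← heq]
    obtain ⟨y, hy, hne, hadj⟩ := h _ _ _ _ hdecomp
    obtain ⟨n, hn, rfl⟩ := List.mem_iff_getElem.mp hy
    have hn' : n < j - i - 1 := by simp [hm] at hn; omega
    refine ⟨⟨i + 1 + n, by omega⟩, by simp; omega, by simp; omega, ?_⟩
    simpa [hm, List.getElem_take, List.getElem_drop] using And.intro hne hadj

end Words

section Projection

variable {α : Type*} [DecidableEq α] (G : SimpleGraph α)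

noncomputable def letterProj (u y : α) : Option Bool :=
  if y = u then some true else if G.Adj y u then none else some false

noncomputable def wordProj (u : α) (w : List α) : List Bool :=
  w.filterMap (letterProj G u)

lemma wordProj_eq_of_adjSwap (u : α) {w w' : List α} (h : AdjSwap G w w') :
    wordProj G u w = wordProj G u w' := by
  obtain ⟨a, b, x, y, hxy, rfl, rfl⟩ := h
  simp only [wordProj, List.filterMap_append, List.filterMap_cons]
  unfold letterProj
  -- of two adjacent letters, either one is erased or both are recorded as `false`
  split_ifs <;> subst_vars <;> simp_all [hxy.ne, hxy.symm]

lemma wordProj_eq_of_wordEquiv (u : α) {w w' : List α} (h : WordEquiv G w w') :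
    wordProj G u w = wordProj G u w' := by
  induction h with
  | refl => rfl
  | tail _ hs ih => exact ih.trans (wordProj_eq_of_adjSwap G u hs)

lemma letterProj_eq_some_true_iff {u y : α} : letterProj G u y = some true ↔ y = u := by
  unfold letterProj; split_ifs <;> simp_all

lemma letterProj_eq_none_iff {u y : α} : letterProj G u y = none ↔ y ≠ u ∧ G.Adj y u := by
  unfold letterProj; split_ifs <;> simp_all

lemma infix_wordProj_of_eq_append {w a m b : List α} {u : α} (hw : w = a ++ u :: (m ++ u :: b))
    (hm : ∀ y ∈ m, y ≠ u → G.Adj y u) : [true, true] <:+: wordProj G u w := by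
  have hmid : ∀ c ∈ wordProj G u m, c = true := by
    intro c hc
    obtain ⟨y, hy, hyc⟩ := List.mem_filterMap.mp hc
    by_cases hyu : y = u
    · simp_all [letterProj]
    · simp [(letterProj_eq_none_iff G).mpr ⟨hyu, hm y hy hyu⟩] at hyc
  have hsplit : wordProj G u w =
      wordProj G u a ++ true :: (wordProj G u m ++ true :: wordProj G u b) := by
    simp [hw, wordProj, letterProj]
  obtain ⟨τ, hτ⟩ : ∃ τ, wordProj G u m ++ true :: wordProj G u b = true :: τ := by
    rcases hpm : wordProj G u m with _ | ⟨c, τ⟩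
    · exact ⟨_, rfl⟩
    · exact ⟨τ ++ true :: wordProj G u b, by simp [hmid c (by simp [hpm])]⟩
  rw [hsplit, hτ]
  exact List.infix_append_of_infix_right (List.prefix_append [true, true] τ).isInfix

lemma exists_eq_append_of_infix_wordProj {w : List α} {u : α}
    (h : [true, true] <:+: wordProj G u w) :
    ∃ a m b, w = a ++ u :: (m ++ u :: b) ∧ ∀ y ∈ m, G.Adj y u := by
  obtain ⟨s, t, hst⟩ := h
  obtain ⟨w₁, b₂, rfl, h₁, -⟩ := List.filterMap_eq_append_iff.mp hst.symm
  obtain ⟨a₁, x, rfl, -, hx⟩ := List.filterMap_eq_append_iff.mp h₁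
  obtain ⟨a₂, u₁, l, rfl, -, hu₁, hl⟩ := List.filterMap_eq_cons_iff.mp hx
  obtain ⟨m, u₂, b₁, rfl, hm, hu₂, -⟩ := List.filterMap_eq_cons_iff.mp hl
  rw [letterProj_eq_some_true_iff] at hu₁ hu₂
  subst hu₁ hu₂
  exact ⟨a₁ ++ a₂, m, b₁ ++ b₂, by simp, fun y hy => ((letterProj_eq_none_iff G).mp (hm y hy)).2⟩

lemma not_isGReduced_iff_exists_infix_wordProj {w : List α} :
    ¬ IsGReduced G w ↔ ∃ u, [true, true] <:+: wordProj G u w := by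
  rw [isGReduced_iff_forall_eq_append]
  push Not
  constructor
  · rintro ⟨a, m, b, u, hw, hm⟩
    exact ⟨u, infix_wordProj_of_eq_append G hw hm⟩
  · rintro ⟨u, hu⟩
    obtain ⟨a, m, b, hw, hm⟩ := exists_eq_append_of_infix_wordProj G hu
    exact ⟨a, m, b, u, hw, fun y hy _ => hm y hy⟩

lemma exists_wordEquiv_cons_of_wordProj_eq_cons {v : α} {w : List α} {τ : List Bool}
    (h : wordProj G v w = true :: τ) : ∃ t, WordEquiv G w (v :: t) := by
  obtain ⟨m, u, b, rfl, hm, hu, -⟩ := List.filterMap_eq_cons_iff.mp h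
  rw [letterProj_eq_some_true_iff] at hu
  subst hu
  exact ⟨m ++ b, wordEquiv_append_cons_of_forall_adj G
    (fun y hy => ((letterProj_eq_none_iff G).mp (hm y hy)).2) b⟩

lemma not_isGReduced_cons_of_wordEquiv {v : α} {w t : List α} (h : WordEquiv G w (v :: t)) :
    ¬ IsGReduced G (v :: w) := by
  refine (not_isGReduced_iff_exists_infix_wordProj G).mpr ⟨v, ?_⟩
  rw [wordProj_eq_of_wordEquiv G v (wordEquiv_cons G v h)]
  simp only [wordProj, List.filterMap_cons, letterProj]
  exact (List.prefix_append [true, true] _).isInfix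

lemma exists_wordEquiv_cons_of_not_isGReduced_cons {v : α} {w : List α} (hw : IsGReduced G w)
    (h : ¬ IsGReduced G (v :: w)) : ∃ t, WordEquiv G w (v :: t) := by
  obtain ⟨u, hu⟩ := (not_isGReduced_iff_exists_infix_wordProj G).mp h
  have hw' : ¬ [true, true] <:+: wordProj G u w :=
    fun hinf => (not_isGReduced_iff_exists_infix_wordProj G).mpr ⟨u, hinf⟩ hw
  rcases hv : letterProj G u v with _ | c
  · simp only [wordProj, List.filterMap_cons, hv] at hu
    exact (hw' hu).elim
  simp only [wordProj, List.filterMap_cons, hv] at hu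
  rcases List.infix_cons_iff.mp hu with hpre | hinf
  · obtain ⟨rfl, τ, hτ⟩ := List.cons_prefix_cons.mp hpre
    rw [letterProj_eq_some_true_iff] at hv
    subst hv
    exact exists_wordEquiv_cons_of_wordProj_eq_cons G hτ.symm
  · exact (hw' hinf).elim

end Projection

/-- for a vertex `v` and a `G`-reduced word `w`, exactly one of the following
holds: `v :: w` is `G`-reduced, or `w` is equivalent to a word beginning with `v`. -/
theorem reduced_prepend_dichotomy (G : SimpleGraph V) (v : V) (w : List V)
    (hw : IsGReduced G w) :
    Xor' (IsGReduced G (v :: w)) (∃ t : List V, WordEquiv G w (v :: t)) :=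
  xor_iff_iff_not.mpr
    ⟨fun h ⟨_, ht⟩ => not_isGReduced_cons_of_wordEquiv G ht h,
      fun h => by_contra fun hred => h (exists_wordEquiv_cons_of_not_isGReduced_cons G hw hred)⟩
end

section
/- R(G) is star-shaped about the origin: if x ∈ R(G) and α ∈ [0,1], then α·x ∈ R(G). -/
open scoped Classical ENNReal

set_option linter.unusedSectionVars false

variable {V : Type*} [Fintype V] [DecidableEq V]

/-!
Along the ray `t ↦ t • x` the clique polynomial satisfies
`d/dt 𝕶_{G,V'}(t x) = -∑_{v ∈ V'} x_v 𝕶_{G, V' ∩ N(v)}(t x)`, since removing `v` from the cliques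
of `V'` through `v` gives exactly the cliques of `V' ∩ N(v)`. By strong induction on `V'` the
polynomials on the right are positive for `t ∈ [0,1]`, so `t ↦ 𝕶_{G,V'}(t x)` is antitone there and
`𝕶_{G,V'}(t x) ≥ 𝕶_{G,V'}(x) > 0`.
-/

open Finset

noncomputable def cliquesIn (G : SimpleGraph V) (V' : Finset V) : Finset (Finset V) :=
  V'.powerset.filter fun K : Finset V => G.IsClique (K : Set V)

section CliquesIn

variable {G : SimpleGraph V} {V' : Finset V}

@[simp]
lemma mem_cliquesIn {K : Finset V} : K ∈ cliquesIn G V' ↔ K ⊆ V' ∧ G.IsClique (K : Set V) := by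
  simp [cliquesIn]

lemma cliquePoly_eq_sum_cliquesIn (x : V → ℝ) :
    cliquePoly G V' x = ∑ K ∈ cliquesIn G V', (-1 : ℝ) ^ #K * ∏ v ∈ K, x v :=
  rfl

lemma sum_cliquesIn_mem_erase {M : Type*} [AddCommMonoid M] (f : Finset V → M) {v : V}
    (hv : v ∈ V') :
    ∑ K ∈ (cliquesIn G V').filter (v ∈ ·), f (K.erase v) =
      ∑ K ∈ cliquesIn G (V'.filter (G.Adj v)), f K := by
  refine sum_nbij' (·.erase v) (insert v) (fun K hK => ?_) (fun K hK => ?_)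
    (fun K hK => insert_erase (mem_filter.1 hK).2) (fun K hK => ?_) (fun _ _ => rfl)
  · simp only [mem_filter, mem_cliquesIn] at hK ⊢
    obtain ⟨⟨hKV, hK⟩, hvK⟩ := hK
    refine ⟨fun u hu => ?_, hK.subset (by simp)⟩
    obtain ⟨hne, huK⟩ := mem_erase.1 hu
    exact mem_filter.2 ⟨hKV huK, hK (mem_coe.2 hvK) (mem_coe.2 huK) hne.symm⟩
  · simp only [mem_filter, mem_cliquesIn] at hK ⊢
    obtain ⟨hKV, hK⟩ := hK
    refine ⟨⟨insert_subset hv fun u hu => (mem_filter.1 (hKV hu)).1, ?_⟩, mem_insert_self v K⟩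
    rw [coe_insert]
    exact hK.insert fun u hu _ => (mem_filter.1 (hKV hu)).2
  · simp only [mem_cliquesIn] at hK
    exact erase_insert fun hvK => G.irrefl (mem_filter.1 (hK.1 hvK)).2

end CliquesIn

section Ray

variable {G : SimpleGraph V} {V' : Finset V} {x : V → ℝ}

lemma prod_smul_apply (K : Finset V) (t : ℝ) :
    ∏ v ∈ K, (t • x) v = t ^ #K * ∏ v ∈ K, x v := by
  simp [prod_mul_distrib]

lemma cliquePoly_smul (t : ℝ) :
    cliquePoly G V' (t • x) = ∑ K ∈ cliquesIn G V', (-1 : ℝ) ^ #K * (∏ v ∈ K, x v) * t ^ #K := by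
  refine sum_congr rfl fun K _ => ?_
  rw [prod_smul_apply]
  ring

/-- The clique `K` contributes once for each of its vertices `v`, as `x_v` times the term of the
clique `K.erase v` in `𝕶(t x)`. -/
lemma sum_cliquesIn_card_mul_pow (t : ℝ) :
    ∑ K ∈ cliquesIn G V', (-1 : ℝ) ^ #K * (∏ v ∈ K, x v) * (#K * t ^ (#K - 1)) =
      -∑ v ∈ V', x v * cliquePoly G (V'.filter (G.Adj v)) (t • x) := by
  have hterm : ∀ K : Finset V, ∀ v ∈ K, (-1 : ℝ) ^ #K * (∏ u ∈ K, x u) * t ^ (#K - 1) =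
      -(x v * ((-1 : ℝ) ^ #(K.erase v) * ∏ u ∈ K.erase v, (t • x) u)) := by
    intro K v hv
    rw [← mul_prod_erase K x hv, ← card_erase_add_one hv, prod_smul_apply, Nat.add_sub_cancel]
    ring
  have hclique : ∀ K ∈ cliquesIn G V', (-1 : ℝ) ^ #K * (∏ v ∈ K, x v) * (#K * t ^ (#K - 1)) =
      ∑ v ∈ K, -(x v * ((-1 : ℝ) ^ #(K.erase v) * ∏ u ∈ K.erase v, (t • x) u)) := by
    intro K _
    rw [← sum_congr rfl (hterm K), sum_const, nsmul_eq_mul]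
    ring
  rw [sum_congr rfl hclique, sum_comm' (t' := V') (s' := fun v => (cliquesIn G V').filter (v ∈ ·))
    (fun K v => by simp only [mem_filter, mem_cliquesIn]; grind), ← sum_neg_distrib]
  refine sum_congr rfl fun v hv => ?_
  rw [sum_neg_distrib, ← mul_sum, sum_cliquesIn_mem_erase (fun K => (-1 : ℝ) ^ #K *
    ∏ u ∈ K, (t • x) u) hv, cliquePoly_eq_sum_cliquesIn]

lemma hasDerivAt_cliquePoly_smul (t : ℝ) :
    HasDerivAt (fun s : ℝ => cliquePoly G V' (s • x))
      (-∑ v ∈ V', x v * cliquePoly G (V'.filter (G.Adj v)) (t • x)) t := by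
  rw [← sum_cliquesIn_card_mul_pow]
  simp_rw [cliquePoly_smul]
  exact HasDerivAt.fun_sum fun K _ => (hasDerivAt_pow #K t).const_mul _

lemma antitoneOn_cliquePoly_smul (hx : ∀ v ∈ V', 0 ≤ x v)
    (hnbr : ∀ v ∈ V', ∀ t ∈ Set.Icc (0 : ℝ) 1, 0 ≤ cliquePoly G (V'.filter (G.Adj v)) (t • x)) :
    AntitoneOn (fun t : ℝ => cliquePoly G V' (t • x)) (Set.Icc 0 1) := by
  refine antitoneOn_of_hasDerivWithinAt_nonpos (convex_Icc 0 1)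
    (fun t _ => (hasDerivAt_cliquePoly_smul t).continuousAt.continuousWithinAt)
    (fun t _ => (hasDerivAt_cliquePoly_smul t).hasDerivWithinAt) fun t ht => ?_
  rw [interior_Icc] at ht
  exact neg_nonpos.2 <| sum_nonneg fun v hv =>
    mul_nonneg (hx v hv) (hnbr v hv t (Set.Ioo_subset_Icc_self ht))

lemma cliquePoly_smul_pos (hx : ∀ v ∈ V', 0 ≤ x v) (hpos : ∀ W ⊆ V', 0 < cliquePoly G W x)
    {t : ℝ} (ht : t ∈ Set.Icc (0 : ℝ) 1) : 0 < cliquePoly G V' (t • x) := by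
  induction V' using Finset.strongInduction generalizing t with
  | H V' ih =>
    have hnbr : ∀ v ∈ V', ∀ s ∈ Set.Icc (0 : ℝ) 1,
        0 ≤ cliquePoly G (V'.filter (G.Adj v)) (s • x) := by
      intro v hv s hs
      have hsub : V'.filter (G.Adj v) ⊂ V' := filter_ssubset.2 ⟨v, hv, G.irrefl⟩
      exact (ih _ hsub (fun u hu => hx u (hsub.subset hu))
        (fun W hW => hpos W (hW.trans hsub.subset)) hs).le
    calc 0 < cliquePoly G V' x := hpos V' subset_rfl
      _ = cliquePoly G V' ((1 : ℝ) • x) := by rw [one_smul]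
      _ ≤ cliquePoly G V' (t • x) :=
        antitoneOn_cliquePoly_smul hx hnbr ht ⟨zero_le_one, le_rfl⟩ ht.2

end Ray

/-- `R(G)` is star-shaped about the origin. -/
theorem regionR_starShaped (G : SimpleGraph V) (x : V → ℝ) (hx : x ∈ regionR G)
    (α : ℝ) (hα : α ∈ Set.Icc (0 : ℝ) 1) :
    α • x ∈ regionR G := by
  obtain ⟨hx01, hxpos⟩ := hx
  refine ⟨fun v => ⟨mul_nonneg hα.1 (hx01 v).1, mul_le_one₀ hα.2 (hx01 v).1 (hx01 v).2⟩,
    fun V' => cliquePoly_smul_pos (fun v _ => (hx01 v).1) (fun W _ => hxpos W) hα⟩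
end
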